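/- For every natural number k and real α > 1, letting y = (α − α^{−1})/2, the sum of |r_j| y^j over the coefficients r_j of the Chebyshev polynomial T_k equals (α^k + (−1)^k α^{−k})/2. -/

import Mathlib

/-!
Substituting `x ↦ i x` into `Tₙ` and dividing by `iⁿ` turns the recursion
`Tₙ₊₂ = 2x Tₙ₊₁ - Tₙ` into `Qₙ₊₂ = 2x Qₙ₊₁ + Qₙ`, so `Qₙ = i⁻ⁿ Tₙ(i x)` has nonnegative real
coefficients, and these are the absolute values of the coefficients of `Tₙ`. The weighted norm of
`Tₙ` at `y` is therefore `Qₙ(y)`. Writing `2y = a + b` with `a = α`, `b = -α⁻¹`, so that `ab = -1`,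
the recursion for `Qₙ` is that of `(aⁿ + bⁿ)/2`.
-/

namespace Polynomial

theorem coeff_comp_C_mul_X {R : Type*} [CommSemiring R] (p : R[X]) (a : R) (j : ℕ) :
    (p.comp (C a * X)).coeff j = a ^ j * p.coeff j := by
  induction p using Polynomial.induction_on' with
  | add p q hp hq => simp [add_comp, hp, hq, mul_add]
  | monomial n b =>
    rw [monomial_comp, mul_pow, ← C_pow, ← mul_assoc, ← C_mul, coeff_C_mul_X_pow, coeff_monomial]
    by_cases h : j = n
    · simp [h, mul_comm]
    · simp [h, Ne.symm h]

namespace Chebyshev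

variable (R : Type*) [CommRing R]

/-- `i⁻ⁿ Tₙ(i X)` for a square root `i` of `-1`, see `T_comp_C_mul_X`. -/
noncomputable def rotT : ℕ → R[X]
  | 0 => 1
  | 1 => X
  | n + 2 => 2 * X * rotT (n + 1) + rotT n

variable {R}

theorem natDegree_rotT_le (n : ℕ) : (rotT R n).natDegree ≤ n := by
  induction n using Nat.twoStepInduction with
  | zero => simp [rotT]
  | one => simpa [rotT] using natDegree_X_le
  | more n ih₁ ih₂ =>
    rw [rotT]
    refine natDegree_add_le_of_degree_le ?_ (by omega)
    have h2X : (2 * X : R[X]).natDegree ≤ 1 :=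
      natDegree_mul_le_of_le (natDegree_ofNat 2).le natDegree_X_le
    exact (natDegree_mul_le_of_le h2X ih₂).trans (by omega)

theorem rotT_coeff_nonneg [PartialOrder R] [IsOrderedRing R] (n j : ℕ) :
    0 ≤ (rotT R n).coeff j := by
  induction n using Nat.twoStepInduction generalizing j with
  | zero => rw [rotT, coeff_one]; split_ifs <;> simp
  | one => rw [rotT, coeff_X]; split_ifs <;> simp
  | more n ih₁ ih₂ =>
    rw [rotT, coeff_add, mul_assoc, coeff_ofNat_mul]
    cases j with
    | zero => simpa using ih₁ 0
    | succ j =>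
      rw [coeff_X_mul]
      exact add_nonneg (mul_nonneg zero_le_two (ih₂ j)) (ih₁ (j + 1))

theorem map_rotT {S : Type*} [CommRing S] (f : R →+* S) (n : ℕ) :
    (rotT R n).map f = rotT S n := by
  induction n using Nat.twoStepInduction with
  | zero => simp [rotT]
  | one => simp [rotT]
  | more n ih₁ ih₂ => simp [rotT, ih₁, ih₂]

theorem T_comp_C_mul_X {i : R} (hi : i ^ 2 = -1) (n : ℕ) :
    (T R n).comp (Polynomial.C i * X) = Polynomial.C (i ^ n) * rotT R n := by
  induction n using Nat.twoStepInduction with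
  | zero => simp [rotT]
  | one => simp [rotT]
  | more n ih₁ ih₂ =>
    have hT : T R ↑(n + 2) = 2 * X * T R ↑(n + 1) - T R n := by
      push_cast; exact T_add_two R n
    rw [hT, sub_comp, mul_comp, ih₁, ih₂, rotT]
    have hi' : Polynomial.C i * Polynomial.C i = -1 := by rw [← map_mul, ← sq, hi, map_neg, map_one]
    simp only [mul_comp, ofNat_comp, X_comp, pow_succ, map_mul]
    linear_combination (-Polynomial.C (i ^ n) * rotT R n) * hi'

theorem two_mul_eval_rotT {a b y : R} (hab : a * b = -1) (hy : 2 * y = a + b) (n : ℕ) :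
    2 * (rotT R n).eval y = a ^ n + b ^ n := by
  induction n using Nat.twoStepInduction with
  | zero => norm_num [rotT]
  | one => simpa [rotT] using hy
  | more n ih₁ ih₂ =>
    simp only [rotT, eval_add, eval_mul, eval_ofNat, eval_X]
    linear_combination y * 2 * ih₂ + ih₁ + (a ^ (n + 1) + b ^ (n + 1)) * hy + (a ^ n + b ^ n) * hab

theorem abs_coeff_T (n j : ℕ) : |(T ℝ n).coeff j| = (rotT ℝ n).coeff j := by
  have h := congrArg (fun p => ‖p.coeff j‖) (T_comp_C_mul_X Complex.I_sq n)
  simp only [coeff_comp_C_mul_X, coeff_C_mul, ← map_T (algebraMap ℝ ℂ),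
    ← map_rotT (algebraMap ℝ ℂ), coeff_map] at h
  simpa [abs_of_nonneg (rotT_coeff_nonneg (R := ℝ) n j)] using h

end Chebyshev

end Polynomial

open Polynomial Chebyshev in
theorem chebyshev_weighted_coeff_norm (k : ℕ) (α : ℝ) (hα : 1 < α) :
    ∑ j ∈ Finset.range (k + 1),
        |(Polynomial.Chebyshev.T ℝ k).coeff j| * ((α - α⁻¹) / 2) ^ j =
      (α ^ k + (-1 : ℝ) ^ k * α⁻¹ ^ k) / 2 := by
  have hα₀ : α ≠ 0 := by positivity
  have hdeg : (rotT ℝ k).natDegree < k + 1 := Nat.lt_succ_of_le (natDegree_rotT_le k)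
  have heval := two_mul_eval_rotT (a := α) (b := -α⁻¹) (y := (α - α⁻¹) / 2)
    (by field_simp) (by ring) k
  calc ∑ j ∈ Finset.range (k + 1), |(T ℝ k).coeff j| * ((α - α⁻¹) / 2) ^ j
      = ∑ j ∈ Finset.range (k + 1), (rotT ℝ k).coeff j * ((α - α⁻¹) / 2) ^ j := by
        simp_rw [abs_coeff_T]
    _ = (rotT ℝ k).eval ((α - α⁻¹) / 2) := (eval_eq_sum_range' hdeg _).symm
    _ = (α ^ k + (-1 : ℝ) ^ k * α⁻¹ ^ k) / 2 := by rw [neg_pow] at heval; linarith
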